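/- arXiv:2007.09840 — 2 statements merged into one kernel-verified Lean document; each statement's English description precedes it below -/
import Mathlib

section
/- (Sobolev-type embedding for Fourier–Besov–Morrey spaces.) Let n ≥ 1, 1 ≤ p₂ ≤ p₁ < ∞, 0 ≤ μ₁, μ₂ < n, s₂ ≤ s₁ ∈ ℝ satisfy s₂ + (n − μ₂)/p₂ = s₁ + (n − μ₁)/p₁, and let 1 ≤ r₁ ≤ r₂ ≤ ∞. Then there is a constant C > 0 such that for every tempered distribution f (modulo polynomials) whose Fourier transform f̂ is locally integrable, ‖f‖_{FN^{s₂}_{p₂,μ₂,r₂}} ≤ C ‖f‖_{FN^{s₁}_{p₁,μ₁,r₁}}; in particular the continuous inclusion FN^{s₁}_{p₁,μ₁,r₁}(ℝⁿ) ⊂ FN^{s₂}_{p₂,μ₂,r₂}(ℝⁿ) holds. -/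
open MeasureTheory ENNReal

noncomputable section

abbrev En (n : ℕ) := EuclideanSpace ℝ (Fin n)

/-- The homogeneous Morrey norm `‖f‖_{q,μ} = sup_{x₀, d>0} d^{-μ/q} ‖f‖_{L^q(B_d(x₀))}`. -/
noncomputable def morreyNorm {n : ℕ} {F : Type*} [NormedAddCommGroup F]
    (q μ : ℝ) (f : En n → F) : ℝ≥0∞ :=
  ⨆ (x₀ : En n) (d : ℝ) (_ : 0 < d),
    ENNReal.ofReal (d ^ (-(μ / q))) *
      eLpNorm f (ENNReal.ofReal q) (volume.restrict (Metric.ball x₀ d))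

/-- ℓʳ norm over ℤ of a family of extended reals. -/
noncomputable def lrNorm (r : ℝ≥0∞) (a : ℤ → ℝ≥0∞) : ℝ≥0∞ :=
  if r = ⊤ then ⨆ j, a j else (∑' j, a j ^ r.toReal) ^ (1 / r.toReal)

/-- A Littlewood–Paley function: smooth, `0 ≤ φ ≤ 1`, supported in the annulus
`{3/4 ≤ |ξ| ≤ 8/3}`, with `∑_{j∈ℤ} φ(2^{-j}ξ) = 1` for `ξ ≠ 0`. -/
def IsLP {n : ℕ} (φ : En n → ℝ) : Prop :=
  ContDiff ℝ (⊤ : ℕ∞) φ ∧ (∀ ξ, 0 ≤ φ ξ) ∧ (∀ ξ, φ ξ ≤ 1) ∧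
    (∀ ξ, φ ξ ≠ 0 → 3 / 4 ≤ ‖ξ‖ ∧ ‖ξ‖ ≤ 8 / 3) ∧
    ∀ ξ : En n, ξ ≠ 0 → HasSum (fun j : ℤ => φ ((2 : ℝ) ^ (-j) • ξ)) 1

/-- Fourier–Besov–Morrey norm `‖f‖_{FN^s_{q,μ,r}}`, expressed in terms of the Fourier
transform `fhat` of `f`. -/
noncomputable def fbmNorm {n : ℕ} {F : Type*} [NormedAddCommGroup F] [NormedSpace ℝ F]
    (s q μ : ℝ) (r : ℝ≥0∞) (φ : En n → ℝ) (fhat : En n → F) : ℝ≥0∞ :=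
  lrNorm r fun j : ℤ =>
    ENNReal.ofReal ((2 : ℝ) ^ ((j : ℝ) * s)) *
      morreyNorm q μ (fun ξ => φ ((2 : ℝ) ^ (-j) • ξ) • fhat ξ)

/-!
The `j`-th block `φ(2^{-j}·) f̂` is supported in the ball of radius `R_j = (8/3) 2^j`. On a ball
`B_ρ`, Hölder's inequality gives `ρ^{-μ₂/p₂} ‖g‖_{L^{p₂}(B_ρ)} ≲ ρ^{s₁-s₂} ‖g‖_{p₁,μ₁}`, the
exponent `(n-μ₂)/p₂ - (n-μ₁)/p₁ = s₁ - s₂ ≥ 0` coming from the scaling relation. For `g` supported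
in a ball of radius `R`, balls with `ρ > R` may be replaced by the ball of radius `2R` about the
origin, so `‖g‖_{p₂,μ₂} ≲ R^{s₁-s₂} ‖g‖_{p₁,μ₁}`. With `R = R_j` the factor `R_j^{s₁-s₂}` turns the
weight `2^{js₂}` into `2^{js₁}`, and `ℓ^{r₁} ⊂ ℓ^{r₂}` concludes.
-/

open Metric

section lrNorm

variable {ι : Type*}

lemma le_tsum_rpow_rpow_one_div {p : ℝ} (hp : 0 < p) (a : ι → ℝ≥0∞) (i : ι) :
    a i ≤ (∑' j, a j ^ p) ^ (1 / p) := by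
  rw [one_div, ENNReal.le_rpow_inv_iff hp]
  exact ENNReal.le_tsum i

lemma tsum_rpow_rpow_one_div_le_of_le {p q : ℝ} (hp : 0 < p) (hpq : p ≤ q) (a : ι → ℝ≥0∞) :
    (∑' j, a j ^ q) ^ (1 / q) ≤ (∑' j, a j ^ p) ^ (1 / p) := by
  set S := (∑' j, a j ^ p) ^ (1 / p)
  have hS : ∑' j, a j ^ p = S ^ p := by
    simp only [S, one_div, ENNReal.rpow_inv_rpow hp.ne']
  have hsplit : ∀ x : ℝ≥0∞, x ^ q = x ^ p * x ^ (q - p) := fun x => by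
    rw [← ENNReal.rpow_add_of_nonneg _ _ hp.le (sub_nonneg.2 hpq), add_sub_cancel]
  rw [one_div, ENNReal.rpow_inv_le_iff (hp.trans_le hpq)]
  calc ∑' j, a j ^ q = ∑' j, a j ^ p * a j ^ (q - p) := tsum_congr fun j => hsplit (a j)
    _ ≤ ∑' j, a j ^ p * S ^ (q - p) := by
        gcongr with j
        exact le_tsum_rpow_rpow_one_div hp a j
    _ = S ^ q := by rw [ENNReal.tsum_mul_right, hS, hsplit]

lemma lrNorm_mono {r : ℝ≥0∞} {a b : ℤ → ℝ≥0∞} (h : a ≤ b) : lrNorm r a ≤ lrNorm r b := by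
  unfold lrNorm
  split_ifs
  · exact iSup_mono h
  · gcongr with j
    exact h j

lemma lrNorm_const_mul {r : ℝ≥0∞} (hr : r ≠ 0) (c : ℝ≥0∞) (a : ℤ → ℝ≥0∞) :
    lrNorm r (fun j => c * a j) = c * lrNorm r a := by
  unfold lrNorm
  split_ifs with hr_top
  · exact (ENNReal.mul_iSup c a).symm
  · have hr_pos : 0 < r.toReal := ENNReal.toReal_pos hr hr_top
    simp_rw [ENNReal.mul_rpow_of_nonneg _ _ hr_pos.le, ENNReal.tsum_mul_left,
      ENNReal.mul_rpow_of_nonneg _ _ (one_div_nonneg.2 hr_pos.le)]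
    rw [one_div, ENNReal.rpow_rpow_inv hr_pos.ne']

lemma lrNorm_antitone {r₁ r₂ : ℝ≥0∞} (hr₁ : r₁ ≠ 0) (hr : r₁ ≤ r₂) (a : ℤ → ℝ≥0∞) :
    lrNorm r₂ a ≤ lrNorm r₁ a := by
  rcases eq_or_ne r₁ ⊤ with rfl | hr₁_top
  · rw [top_le_iff.1 hr]
  have hr₁_pos : 0 < r₁.toReal := ENNReal.toReal_pos hr₁ hr₁_top
  unfold lrNorm
  rw [if_neg hr₁_top]
  split_ifs with hr₂_top
  · exact iSup_le (le_tsum_rpow_rpow_one_div hr₁_pos a)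
  · exact tsum_rpow_rpow_one_div_le_of_le hr₁_pos (ENNReal.toReal_mono hr₂_top hr) a

end lrNorm

section Morrey

variable {n : ℕ} {F : Type*} [NormedAddCommGroup F]

lemma eLpNorm_restrict_ball_le_morreyNorm (q μ : ℝ) (g : En n → F) (y : En n) {ρ : ℝ}
    (hρ : 0 < ρ) :
    eLpNorm g (ENNReal.ofReal q) (volume.restrict (ball y ρ)) ≤
      ENNReal.ofReal (ρ ^ (μ / q)) * morreyNorm q μ g := by
  have hterm : ENNReal.ofReal (ρ ^ (-(μ / q))) *
      eLpNorm g (ENNReal.ofReal q) (volume.restrict (ball y ρ)) ≤ morreyNorm q μ g :=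
    le_iSup₂_of_le y ρ (le_iSup_of_le hρ le_rfl)
  calc eLpNorm g (ENNReal.ofReal q) (volume.restrict (ball y ρ))
      = ENNReal.ofReal (ρ ^ (μ / q)) * (ENNReal.ofReal (ρ ^ (-(μ / q))) *
          eLpNorm g (ENNReal.ofReal q) (volume.restrict (ball y ρ))) := by
        rw [← mul_assoc, ← ENNReal.ofReal_mul (by positivity), ← Real.rpow_add hρ,
          add_neg_cancel, Real.rpow_zero, ENNReal.ofReal_one, one_mul]
    _ ≤ ENNReal.ofReal (ρ ^ (μ / q)) * morreyNorm q μ g := by gcongr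

lemma volume_ball_rpow (y : En n) {ρ θ : ℝ} (hρ : 0 < ρ) (hθ : 0 ≤ θ) :
    volume (ball y ρ) ^ θ = ENNReal.ofReal (ρ ^ (n * θ)) * volume (ball (0 : En n) 1) ^ θ := by
  rw [Measure.addHaar_ball_of_pos volume y hρ, finrank_euclideanSpace_fin,
    ENNReal.mul_rpow_of_nonneg _ _ hθ, ENNReal.ofReal_rpow_of_pos (by positivity),
    ← Real.rpow_natCast, ← Real.rpow_mul hρ.le]

lemma rpow_mul_eLpNorm_restrict_ball_le {p₁ p₂ : ℝ} (μ₁ μ₂ : ℝ) (hp₂ : 0 < p₂) (hp : p₂ ≤ p₁)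
    {g : En n → F} (hg : AEStronglyMeasurable g volume) (y : En n) {ρ : ℝ} (hρ : 0 < ρ) :
    ENNReal.ofReal (ρ ^ (-(μ₂ / p₂))) *
        eLpNorm g (ENNReal.ofReal p₂) (volume.restrict (ball y ρ)) ≤
      ENNReal.ofReal (ρ ^ ((n - μ₂) / p₂ - (n - μ₁) / p₁)) *
        volume (ball (0 : En n) 1) ^ (1 / p₂ - 1 / p₁) * morreyNorm p₁ μ₁ g := by
  have hθ : 0 ≤ 1 / p₂ - 1 / p₁ := sub_nonneg.2 (one_div_le_one_div_of_le hp₂ hp)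
  have holder := eLpNorm_le_eLpNorm_mul_rpow_measure_univ (μ := volume.restrict (ball y ρ))
    (ENNReal.ofReal_le_ofReal hp) hg.restrict
  rw [Measure.restrict_apply_univ, ENNReal.toReal_ofReal hp₂.le,
    ENNReal.toReal_ofReal (hp₂.le.trans hp), volume_ball_rpow y hρ hθ] at holder
  have hexp : ((n : ℝ) - μ₂) / p₂ - (n - μ₁) / p₁
      = -(μ₂ / p₂) + (μ₁ / p₁ + n * (1 / p₂ - 1 / p₁)) := by
    field_simp
    ring
  calc ENNReal.ofReal (ρ ^ (-(μ₂ / p₂))) *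
        eLpNorm g (ENNReal.ofReal p₂) (volume.restrict (ball y ρ))
      ≤ ENNReal.ofReal (ρ ^ (-(μ₂ / p₂))) *
          (ENNReal.ofReal (ρ ^ (μ₁ / p₁)) * morreyNorm p₁ μ₁ g *
            (ENNReal.ofReal (ρ ^ (n * (1 / p₂ - 1 / p₁))) *
              volume (ball (0 : En n) 1) ^ (1 / p₂ - 1 / p₁))) := by
        gcongr
        exact holder.trans (by gcongr; exact eLpNorm_restrict_ball_le_morreyNorm _ _ g y hρ)
    _ = _ := by
        rw [hexp, Real.rpow_add hρ, Real.rpow_add hρ, ENNReal.ofReal_mul (by positivity),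
          ENNReal.ofReal_mul (by positivity)]
        ring

lemma morreyNorm_le_of_support_subset {q μ R : ℝ} (hq : 0 ≤ q) (hμ : 0 ≤ μ) (hR : 0 < R)
    {g : En n → F} (hsupp : Function.support g ⊆ closedBall 0 R) {B : ℝ≥0∞}
    (hB : ∀ y d, 0 < d → d ≤ 2 * R →
      ENNReal.ofReal (d ^ (-(μ / q))) *
        eLpNorm g (ENNReal.ofReal q) (volume.restrict (ball y d)) ≤ B) :
    morreyNorm q μ g ≤ ENNReal.ofReal (2 ^ (μ / q)) * B := by
  have hμq : 0 ≤ μ / q := div_nonneg hμ hq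
  refine iSup₂_le fun y d => iSup_le fun hd => ?_
  rcases le_or_gt d R with hdR | hRd
  · exact (hB y d hd (by linarith)).trans
      (le_mul_of_one_le_left zero_le (ENNReal.one_le_ofReal.2 (Real.one_le_rpow one_le_two hμq)))
  · have hball : eLpNorm g (ENNReal.ofReal q) (volume.restrict (ball y d)) ≤
        eLpNorm g (ENNReal.ofReal q) (volume.restrict (ball 0 (2 * R))) := by
      rw [eLpNorm_restrict_eq_of_support_subset
        (hsupp.trans (closedBall_subset_ball (by linarith)))]
      exact eLpNorm_mono_measure _ Measure.restrict_le_self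
    have hpow : d ^ (-(μ / q)) ≤ 2 ^ (μ / q) * (2 * R) ^ (-(μ / q)) :=
      calc d ^ (-(μ / q)) ≤ R ^ (-(μ / q)) :=
            Real.rpow_le_rpow_of_nonpos hR hRd.le (neg_nonpos.2 hμq)
        _ = 2 ^ (μ / q) * (2 * R) ^ (-(μ / q)) := by
            rw [Real.mul_rpow zero_le_two hR.le, ← mul_assoc, ← Real.rpow_add two_pos,
              add_neg_cancel, Real.rpow_zero, one_mul]
    calc ENNReal.ofReal (d ^ (-(μ / q))) *
          eLpNorm g (ENNReal.ofReal q) (volume.restrict (ball y d))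
        ≤ ENNReal.ofReal (2 ^ (μ / q)) * (ENNReal.ofReal ((2 * R) ^ (-(μ / q))) *
          eLpNorm g (ENNReal.ofReal q) (volume.restrict (ball 0 (2 * R)))) := by
          rw [← mul_assoc, ← ENNReal.ofReal_mul (by positivity)]
          gcongr
      _ ≤ ENNReal.ofReal (2 ^ (μ / q)) * B := by gcongr; exact hB 0 _ (by positivity) le_rfl

lemma morreyNorm_le_morreyNorm_of_support_subset {p₁ p₂ μ₁ μ₂ R : ℝ} (hp₂ : 0 < p₂)
    (hp : p₂ ≤ p₁) (hμ₂ : 0 ≤ μ₂) (he : 0 ≤ (n - μ₂) / p₂ - (n - μ₁) / p₁) (hR : 0 < R)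
    {g : En n → F} (hg : AEStronglyMeasurable g volume)
    (hsupp : Function.support g ⊆ closedBall 0 R) :
    morreyNorm p₂ μ₂ g ≤ ENNReal.ofReal (2 ^ (μ₂ / p₂)) *
      (ENNReal.ofReal ((2 * R) ^ ((n - μ₂) / p₂ - (n - μ₁) / p₁)) *
        volume (ball (0 : En n) 1) ^ (1 / p₂ - 1 / p₁) * morreyNorm p₁ μ₁ g) :=
  morreyNorm_le_of_support_subset hp₂.le hμ₂ hR hsupp fun y _ hd hdR =>
    (rpow_mul_eLpNorm_restrict_ball_le μ₁ μ₂ hp₂ hp hg y hd).trans (by gcongr)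

lemma rpow_mul_morreyNorm_dyadic_block_le [NormedSpace ℝ F] {φ : En n → ℝ} {A : ℝ} (hA : 0 < A)
    (hφ : Measurable φ) (hφ_supp : ∀ ξ, φ ξ ≠ 0 → ‖ξ‖ ≤ A) {fhat : En n → F}
    (hf : AEStronglyMeasurable fhat volume) {p₁ p₂ μ₁ μ₂ s₁ s₂ : ℝ} (hp₂ : 0 < p₂)
    (hp : p₂ ≤ p₁) (hμ₂ : 0 ≤ μ₂) (hs : s₂ ≤ s₁)
    (hscale : s₂ + (n - μ₂) / p₂ = s₁ + (n - μ₁) / p₁) (j : ℤ) :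
    ENNReal.ofReal (2 ^ ((j : ℝ) * s₂)) *
        morreyNorm p₂ μ₂ (fun ξ => φ ((2 : ℝ) ^ (-j) • ξ) • fhat ξ) ≤
      ENNReal.ofReal (2 ^ (μ₂ / p₂)) * ENNReal.ofReal ((2 * A) ^ (s₁ - s₂)) *
        volume (ball (0 : En n) 1) ^ (1 / p₂ - 1 / p₁) *
        (ENNReal.ofReal (2 ^ ((j : ℝ) * s₁)) *
          morreyNorm p₁ μ₁ (fun ξ => φ ((2 : ℝ) ^ (-j) • ξ) • fhat ξ)) := by
  set g : En n → F := fun ξ => φ ((2 : ℝ) ^ (-j) • ξ) • fhat ξ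
  have hg : AEStronglyMeasurable g volume :=
    (hφ.comp (measurable_const_smul _)).aestronglyMeasurable.smul hf
  have hsupp : Function.support g ⊆ closedBall 0 (A * 2 ^ (j : ℝ)) := fun ξ hξ => by
    have hφξ := hφ_supp _ (left_ne_zero_of_smul hξ)
    rw [norm_smul, zpow_neg, Real.norm_eq_abs, abs_of_pos (by positivity),
      inv_mul_le_iff₀ (by positivity)] at hφξ
    rwa [mem_closedBall_zero_iff, Real.rpow_intCast, mul_comm]
  have he : ((n : ℝ) - μ₂) / p₂ - (n - μ₁) / p₁ = s₁ - s₂ := by linarith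
  have hmorrey := morreyNorm_le_morreyNorm_of_support_subset hp₂ hp hμ₂ (he ▸ sub_nonneg.2 hs)
    (by positivity) hg hsupp
  have hpow : ENNReal.ofReal (2 ^ ((j : ℝ) * s₂)) *
        ENNReal.ofReal ((2 * (A * 2 ^ (j : ℝ))) ^ (s₁ - s₂))
      = ENNReal.ofReal ((2 * A) ^ (s₁ - s₂)) * ENNReal.ofReal (2 ^ ((j : ℝ) * s₁)) := by
    rw [← ENNReal.ofReal_mul (by positivity), ← ENNReal.ofReal_mul (by positivity), ← mul_assoc,
      Real.mul_rpow (by positivity) (by positivity), ← Real.rpow_mul zero_le_two, mul_left_comm,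
      ← Real.rpow_add two_pos]
    ring_nf
  calc ENNReal.ofReal (2 ^ ((j : ℝ) * s₂)) * morreyNorm p₂ μ₂ g
      ≤ ENNReal.ofReal (2 ^ ((j : ℝ) * s₂)) * (ENNReal.ofReal (2 ^ (μ₂ / p₂)) *
          (ENNReal.ofReal ((2 * (A * 2 ^ (j : ℝ))) ^ (s₁ - s₂)) *
            volume (ball (0 : En n) 1) ^ (1 / p₂ - 1 / p₁) * morreyNorm p₁ μ₁ g)) := by
        rw [← he]
        exact mul_le_mul_right hmorrey _
    _ = ENNReal.ofReal (2 ^ (μ₂ / p₂)) * (ENNReal.ofReal (2 ^ ((j : ℝ) * s₂)) *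
          ENNReal.ofReal ((2 * (A * 2 ^ (j : ℝ))) ^ (s₁ - s₂))) *
          volume (ball (0 : En n) 1) ^ (1 / p₂ - 1 / p₁) * morreyNorm p₁ μ₁ g := by ring
    _ = _ := by
        rw [hpow]
        ring

end Morrey

theorem fbm_sobolev_embedding_general {n : ℕ} (p₁ p₂ μ₁ μ₂ s₁ s₂ : ℝ) (r₁ r₂ : ℝ≥0∞)
    (hp₂ : 1 ≤ p₂) (hp : p₂ ≤ p₁)
    (hμ₂ : 0 ≤ μ₂)
    (hs : s₂ ≤ s₁) (hscale : s₂ + (n - μ₂) / p₂ = s₁ + (n - μ₁) / p₁)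
    (hr₁ : 1 ≤ r₁) (hr : r₁ ≤ r₂)
    (φ : En n → ℝ) (hφ : IsLP φ) :
    ∃ C > (0 : ℝ), ∀ fhat : En n → ℂ,
      LocallyIntegrable fhat volume →
      fbmNorm s₂ p₂ μ₂ r₂ φ fhat ≤ ENNReal.ofReal C * fbmNorm s₁ p₁ μ₁ r₁ φ fhat := by
  set V := volume (ball (0 : En n) 1) ^ (1 / p₂ - 1 / p₁)
  have hV_top : V ≠ ⊤ := ENNReal.rpow_ne_top_of_nonneg
    (sub_nonneg.2 (one_div_le_one_div_of_le (by linarith) hp)) measure_ball_lt_top.ne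
  have hV_pos : 0 < V.toReal := ENNReal.toReal_pos
    (ENNReal.rpow_pos (measure_ball_pos _ _ one_pos) measure_ball_lt_top.ne).ne' hV_top
  set C : ℝ := 2 ^ (μ₂ / p₂) * (2 * (8 / 3)) ^ (s₁ - s₂) * V.toReal
  have hC : ENNReal.ofReal C
      = ENNReal.ofReal (2 ^ (μ₂ / p₂)) * ENNReal.ofReal ((2 * (8 / 3)) ^ (s₁ - s₂)) * V := by
    rw [ENNReal.ofReal_mul (by positivity), ENNReal.ofReal_mul (by positivity),
      ENNReal.ofReal_toReal hV_top]
  refine ⟨C, by positivity, fun fhat hf => ?_⟩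
  have hr₁_ne : r₁ ≠ 0 := (zero_lt_one.trans_le hr₁).ne'
  calc fbmNorm s₂ p₂ μ₂ r₂ φ fhat
      ≤ lrNorm r₂ fun j => ENNReal.ofReal C * (ENNReal.ofReal (2 ^ ((j : ℝ) * s₁)) *
          morreyNorm p₁ μ₁ fun ξ => φ ((2 : ℝ) ^ (-j) • ξ) • fhat ξ) :=
        lrNorm_mono fun j => hC ▸ rpow_mul_morreyNorm_dyadic_block_le (by norm_num)
          hφ.1.continuous.measurable (fun ξ hξ => (hφ.2.2.2.1 ξ hξ).2) hf.aestronglyMeasurable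
          (by linarith) hp hμ₂ hs hscale j
    _ = ENNReal.ofReal C * lrNorm r₂ fun j => ENNReal.ofReal (2 ^ ((j : ℝ) * s₁)) *
          morreyNorm p₁ μ₁ fun ξ => φ ((2 : ℝ) ^ (-j) • ξ) • fhat ξ :=
        lrNorm_const_mul (ne_bot_of_le_ne_bot hr₁_ne hr) _ _
    _ ≤ ENNReal.ofReal C * fbmNorm s₁ p₁ μ₁ r₁ φ fhat := by
        gcongr
        exact lrNorm_antitone hr₁_ne hr _

/-- Sobolev-type embedding for Fourier–Besov–Morrey spaces:
if `p₂ ≤ p₁`, `s₂ ≤ s₁`, `s₂ + (n−μ₂)/p₂ = s₁ + (n−μ₁)/p₁` and `r₁ ≤ r₂`, then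
`‖f‖_{FN^{s₂}_{p₂,μ₂,r₂}} ≤ C ‖f‖_{FN^{s₁}_{p₁,μ₁,r₁}}` for all tempered distributions `f`
(modulo polynomials) with locally integrable Fourier transform `fhat`. -/
theorem fbm_sobolev_embedding {n : ℕ} (hn : 1 ≤ n) (p₁ p₂ μ₁ μ₂ s₁ s₂ : ℝ) (r₁ r₂ : ℝ≥0∞)
    (hp₂ : 1 ≤ p₂) (hp : p₂ ≤ p₁)
    (hμ₁ : 0 ≤ μ₁) (hμ₁' : μ₁ < n) (hμ₂ : 0 ≤ μ₂) (hμ₂' : μ₂ < n)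
    (hs : s₂ ≤ s₁) (hscale : s₂ + (n - μ₂) / p₂ = s₁ + (n - μ₁) / p₁)
    (hr₁ : 1 ≤ r₁) (hr : r₁ ≤ r₂)
    (φ : En n → ℝ) (hφ : IsLP φ) :
    ∃ C > (0 : ℝ), ∀ fhat : En n → ℂ,
      LocallyIntegrable fhat volume →
      fbmNorm s₂ p₂ μ₂ r₂ φ fhat ≤ ENNReal.ofReal C * fbmNorm s₁ p₁ μ₁ r₁ φ fhat :=
  fbm_sobolev_embedding_general p₁ p₂ μ₁ μ₂ s₁ s₂ r₁ r₂ hp₂ hp hμ₂ hs hscale hr₁ hr φ hφ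

end
end

section
/- (Smoothing estimate for the fractional Boussinesq–Coriolis–Stratification semigroup.) Let 0 ≤ μ < 3, 1 ≤ q₂ ≤ q₁ < ∞, 1 ≤ r ≤ ∞, s ∈ ℝ, 1/2 ≤ α < 5/2, ν > 0, Ω ≠ 0 and N > 0. Then there is a constant C > 0, independent of Ω and N, such that for every t > 0 and every ℂ⁴-valued v₀ ∈ FN^s_{q₁,μ,r}(ℝ³), ‖S^α_{Ω,N}(t)v₀‖_{FN^s_{q₂,μ,r}} ≤ C L ν^{−(1/(2α))((3−μ)/q₂ − (3−μ)/q₁)} t^{−(1/(2α))((3−μ)/q₂ − (3−μ)/q₁)} ‖v₀‖_{FN^s_{q₁,μ,r}}, where L = max{2, |Ω|/N, N/|Ω|}. -/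
open MeasureTheory ENNReal

noncomputable section

/-- Chemin–Lerner norm `𝓛¹((0,∞); FN^s_{q,μ,r})`, in terms of the Fourier transform. -/
noncomputable def clNorm1 {n : ℕ} {F : Type*} [NormedAddCommGroup F] [NormedSpace ℝ F]
    (s q μ : ℝ) (r : ℝ≥0∞) (φ : En n → ℝ) (fhat : ℝ → En n → F) : ℝ≥0∞ :=
  lrNorm r fun j : ℤ =>
    ENNReal.ofReal ((2 : ℝ) ^ ((j : ℝ) * s)) *
      ∫⁻ t in Set.Ioi (0 : ℝ), morreyNorm q μ (fun ξ => φ ((2 : ℝ) ^ (-j) • ξ) • fhat t ξ)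

/-- Chemin–Lerner norm `𝓛^∞((0,∞); FN^s_{q,μ,r})`, in terms of the Fourier transform. -/
noncomputable def clNormInf {n : ℕ} {F : Type*} [NormedAddCommGroup F] [NormedSpace ℝ F]
    (s q μ : ℝ) (r : ℝ≥0∞) (φ : En n → ℝ) (fhat : ℝ → En n → F) : ℝ≥0∞ :=
  lrNorm r fun j : ℤ =>
    ENNReal.ofReal ((2 : ℝ) ^ ((j : ℝ) * s)) *
      essSup (fun t => morreyNorm q μ (fun ξ => φ ((2 : ℝ) ^ (-j) • ξ) • fhat t ξ))
        (volume.restrict (Set.Ioi (0 : ℝ)))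

/-- Norm of `X_r = 𝓛^∞(I;FN^s_{q,μ,r}) ∩ 𝓛^1(I;FN^{s+2α}_{q,μ,r})`. -/
noncomputable def xrNorm {n : ℕ} {F : Type*} [NormedAddCommGroup F] [NormedSpace ℝ F]
    (s α q μ : ℝ) (r : ℝ≥0∞) (φ : En n → ℝ) (fhat : ℝ → En n → F) : ℝ≥0∞ :=
  clNormInf s q μ r φ fhat + clNorm1 (s + 2 * α) q μ r φ fhat

/-- `|ξ|' = √(N²ξ₁² + N²ξ₂² + Ω²ξ₃²)`. -/
noncomputable def nxp (Ω N : ℝ) (ξ : En 3) : ℝ :=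
  Real.sqrt (N ^ 2 * (ξ 0) ^ 2 + N ^ 2 * (ξ 1) ^ 2 + Ω ^ 2 * (ξ 2) ^ 2)

noncomputable def M1 (Ω N : ℝ) (ξ : En 3) : Matrix (Fin 4) (Fin 4) ℝ :=
  ((nxp Ω N ξ) ^ 2)⁻¹ •
    !![Ω ^ 2 * (ξ 2) ^ 2, 0, -(N ^ 2 * ξ 0 * ξ 2), Ω * N * ξ 1 * ξ 2;
       0, Ω ^ 2 * (ξ 2) ^ 2, -(N ^ 2 * ξ 1 * ξ 2), -(Ω * N * ξ 0 * ξ 2);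
       -(Ω ^ 2 * ξ 0 * ξ 2), -(Ω ^ 2 * ξ 1 * ξ 2), N ^ 2 * ((ξ 0) ^ 2 + (ξ 1) ^ 2), 0;
       Ω * N * ξ 1 * ξ 2, -(Ω * N * ξ 0 * ξ 2), 0, N ^ 2 * ((ξ 0) ^ 2 + (ξ 1) ^ 2)]

noncomputable def M2 (Ω N : ℝ) (ξ : En 3) : Matrix (Fin 4) (Fin 4) ℝ :=
  (‖ξ‖ * nxp Ω N ξ)⁻¹ •
    !![0, -(Ω * (ξ 2) ^ 2), Ω * ξ 1 * ξ 2, N * ξ 0 * ξ 2;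
       Ω * (ξ 2) ^ 2, 0, -(Ω * ξ 0 * ξ 2), N * ξ 1 * ξ 2;
       -(Ω * ξ 1 * ξ 2), Ω * ξ 0 * ξ 2, 0, -(N * ((ξ 0) ^ 2 + (ξ 1) ^ 2));
       -(N * ξ 0 * ξ 2), -(N * ξ 1 * ξ 2), N * ((ξ 0) ^ 2 + (ξ 1) ^ 2), 0]

noncomputable def M3 (Ω N : ℝ) (ξ : En 3) : Matrix (Fin 4) (Fin 4) ℝ :=
  ((nxp Ω N ξ) ^ 2)⁻¹ •
    !![N ^ 2 * (ξ 1) ^ 2, -(N ^ 2 * ξ 0 * ξ 1), 0, -(Ω * N * ξ 1 * ξ 2);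
       -(N ^ 2 * ξ 0 * ξ 1), N ^ 2 * (ξ 0) ^ 2, 0, Ω * N * ξ 0 * ξ 2;
       0, 0, 0, 0;
       -(Ω * N * ξ 1 * ξ 2), Ω * N * ξ 0 * ξ 2, 0, Ω ^ 2 * (ξ 2) ^ 2]

/-- Fourier symbol of the fractional Boussinesq–Coriolis–Stratification semigroup
`S^α_{Ω,N}(t)`. -/
noncomputable def symS (ν α Ω N t : ℝ) (ξ : En 3) : Matrix (Fin 4) (Fin 4) ℝ :=
  Real.exp (-(ν * t * ‖ξ‖ ^ (2 * α))) •
    (Real.cos (t * nxp Ω N ξ / ‖ξ‖) • M1 Ω N ξ +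
      Real.sin (t * nxp Ω N ξ / ‖ξ‖) • M2 Ω N ξ + M3 Ω N ξ)

/-- Action of `S^α_{Ω,N}(t)` on the Fourier side: `(S(t)v₀)^ = [S(t)]^ v̂₀`. -/
noncomputable def applyS (ν α Ω N t : ℝ) (v0 : En 3 → Fin 4 → ℂ) : En 3 → Fin 4 → ℂ :=
  fun ξ => ((symS ν α Ω N t ξ).map (fun x : ℝ => (x : ℂ))).mulVec (v0 ξ)

/-!
On the support of `φ_j` one has `|ξ| ≈ 2^j`. There every entry of `M₁` is at most `L` (the
ratios `N/|Ω|` and `|Ω|/N` enter through the entries `N²ξᵢξ₃` and `Ω²ξᵢξ₃`), and every entry of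
`M₂` and `M₃` is at most `1`, so the symbol multiplies `φ_j v̂₀` pointwise by at most
`12 L e^{-νt (3·2^j/4)^{2α}}`. A function supported in a ball of radius `R` satisfies the
Bernstein-type inequality `‖f‖_{q₂,μ} ≲ R^{(3-μ)(1/q₂-1/q₁)} ‖f‖_{q₁,μ}`, by Hölder's inequality
on the intersection of that ball with each ball of the Morrey supremum. Finally
`R^β e^{-νt R^{2α}} ≲ (νt)^{-β/(2α)}` because `y^σ e^{-y} ≤ σ^σ`, and the bound on each dyadic
block passes to the `ℓ^r` norm.
-/

lemma abs_mul_le_of_abs_le {x y a b : ℝ} (hx : |x| ≤ a) (hy : |y| ≤ b) : |x * y| ≤ a * b := by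
  rw [abs_mul]
  exact mul_le_mul hx hy (abs_nonneg y) ((abs_nonneg x).trans hx)

lemma abs_le_of_eq_mul {e x y a b c : ℝ} (he : e = x * y) (hx : |x| ≤ a) (hy : |y| ≤ b)
    (hc : a * b ≤ c) : |e| ≤ c :=
  he ▸ (abs_mul_le_of_abs_le hx hy).trans hc

lemma abs_inv_smul_apply_le {m n : Type*} {A : Matrix m n ℝ} {c L : ℝ} (hc : 0 ≤ c)
    (hL : 0 ≤ L) (h : ∀ i k, |A i k| ≤ L * c) (i : m) (k : n) : |(c⁻¹ • A) i k| ≤ L := by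
  rw [Matrix.smul_apply, smul_eq_mul]
  rcases hc.eq_or_lt with rfl | hc
  · simpa using hL
  · rw [abs_mul, abs_inv, abs_of_pos hc, inv_mul_le_iff₀ hc, mul_comm]
    exact h i k

lemma norm_map_ofReal_mulVec_le {m n : Type*} [Fintype m] [Fintype n] {A : Matrix m n ℝ}
    {B : ℝ} (hB0 : 0 ≤ B) (hB : ∀ i k, |A i k| ≤ B) (v : n → ℂ) :
    ‖(A.map fun x : ℝ => (x : ℂ)).mulVec v‖ ≤ Fintype.card n * B * ‖v‖ := by
  refine (pi_norm_le_iff_of_nonneg (by positivity)).2 fun i => ?_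
  calc ‖∑ k, (A i k : ℂ) * v k‖ ≤ ∑ k, ‖(A i k : ℂ) * v k‖ := norm_sum_le _ _
    _ ≤ ∑ _k : n, B * ‖v‖ := Finset.sum_le_sum fun k _ => by
        rw [norm_mul, Complex.norm_real, Real.norm_eq_abs]
        exact mul_le_mul (hB i k) (norm_le_pi_norm v k) (norm_nonneg _) hB0
    _ = Fintype.card n * B * ‖v‖ := by simp [mul_assoc]

lemma abs_apply_le_norm {n : ℕ} (ξ : En n) (i : Fin n) : |ξ i| ≤ ‖ξ‖ := by
  simpa only [Real.norm_eq_abs] using PiLp.norm_apply_le ξ i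

section Symbol

variable (Ω N : ℝ) {L : ℝ} (ξ : En 3)

lemma nxp_nonneg : 0 ≤ nxp Ω N ξ := Real.sqrt_nonneg _

lemma nxp_sq : nxp Ω N ξ ^ 2 = N ^ 2 * ξ 0 ^ 2 + N ^ 2 * ξ 1 ^ 2 + Ω ^ 2 * ξ 2 ^ 2 :=
  Real.sq_sqrt (by positivity)

lemma norm_sq_eq_sum : ‖ξ‖ ^ 2 = ξ 0 ^ 2 + ξ 1 ^ 2 + ξ 2 ^ 2 := by
  simp [EuclideanSpace.norm_sq_eq, Fin.sum_univ_three]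

lemma abs_mul_apply_le_nxp {i : Fin 3} (hi : i ≠ 2) : |N * ξ i| ≤ nxp Ω N ξ := by
  refine Real.abs_le_sqrt ?_
  fin_cases i <;> simp at hi ⊢ <;>
    nlinarith [sq_nonneg (N * ξ 0), sq_nonneg (N * ξ 1), sq_nonneg (Ω * ξ 2)]

lemma abs_mul_apply_two_le_nxp : |Ω * ξ 2| ≤ nxp Ω N ξ :=
  Real.abs_le_sqrt (by nlinarith [sq_nonneg (N * ξ 0), sq_nonneg (N * ξ 1)])

lemma sq_mul_add_sq_le_nxp_sq : N ^ 2 * (ξ 0 ^ 2 + ξ 1 ^ 2) ≤ nxp Ω N ξ ^ 2 := by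
  rw [nxp_sq]; nlinarith [sq_nonneg (Ω * ξ 2)]

lemma abs_mul_apply_le_mul_nxp (hL : 0 ≤ L) (hΩN : |Ω| ≤ L * |N|) {i : Fin 3} (hi : i ≠ 2) :
    |Ω * ξ i| ≤ L * nxp Ω N ξ :=
  calc |Ω * ξ i| ≤ L * |N| * |ξ i| := by rw [abs_mul]; gcongr
    _ = L * |N * ξ i| := by rw [abs_mul, mul_assoc]
    _ ≤ L * nxp Ω N ξ := by gcongr; exact abs_mul_apply_le_nxp Ω N ξ hi

lemma abs_mul_apply_two_le_mul_nxp (hL : 0 ≤ L) (hNΩ : |N| ≤ L * |Ω|) :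
    |N * ξ 2| ≤ L * nxp Ω N ξ :=
  calc |N * ξ 2| ≤ L * |Ω| * |ξ 2| := by rw [abs_mul]; gcongr
    _ = L * |Ω * ξ 2| := by rw [abs_mul, mul_assoc]
    _ ≤ L * nxp Ω N ξ := by gcongr; exact abs_mul_apply_two_le_nxp Ω N ξ

lemma abs_mul_sq_add_sq_le_norm_mul_nxp : |N * (ξ 0 ^ 2 + ξ 1 ^ 2)| ≤ ‖ξ‖ * nxp Ω N ξ := by
  refine abs_le_of_sq_le_sq ?_ (mul_nonneg (norm_nonneg ξ) (nxp_nonneg Ω N ξ))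
  calc (N * (ξ 0 ^ 2 + ξ 1 ^ 2)) ^ 2 = N ^ 2 * (ξ 0 ^ 2 + ξ 1 ^ 2) * (ξ 0 ^ 2 + ξ 1 ^ 2) := by ring
    _ ≤ nxp Ω N ξ ^ 2 * ‖ξ‖ ^ 2 := by
      gcongr
      · exact sq_mul_add_sq_le_nxp_sq Ω N ξ
      · rw [norm_sq_eq_sum]; nlinarith [sq_nonneg (ξ 2)]
    _ = (‖ξ‖ * nxp Ω N ξ) ^ 2 := by ring

lemma abs_M1_apply_le (hL : 1 ≤ L) (hNΩ : |N| ≤ L * |Ω|) (hΩN : |Ω| ≤ L * |N|) (i k : Fin 4) :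
    |M1 Ω N ξ i k| ≤ L := by
  have hL0 : 0 ≤ L := zero_le_one.trans hL
  set p := nxp Ω N ξ
  have hx := abs_mul_apply_le_nxp Ω N ξ (i := 0) (by decide)
  have hy := abs_mul_apply_le_nxp Ω N ξ (i := 1) (by decide)
  have hz := abs_mul_apply_two_le_nxp Ω N ξ
  have hx' := abs_mul_apply_le_mul_nxp Ω N ξ hL0 hΩN (i := 0) (by decide)
  have hy' := abs_mul_apply_le_mul_nxp Ω N ξ hL0 hΩN (i := 1) (by decide)
  have hz' := abs_mul_apply_two_le_mul_nxp Ω N ξ hL0 hNΩ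
  have hp2 : p ^ 2 ≤ L * p ^ 2 := le_mul_of_one_le_left (sq_nonneg p) hL
  have hpp : p * p ≤ L * p ^ 2 := by rwa [← sq]
  have hpLp : p * (L * p) ≤ L * p ^ 2 := le_of_eq (by ring)
  have hLpp : L * p * p ≤ L * p ^ 2 := le_of_eq (by ring)
  have hzz : |Ω ^ 2 * ξ 2 ^ 2| ≤ L * p ^ 2 := abs_le_of_eq_mul (by ring) hz hz hpp
  have hxz : |N ^ 2 * ξ 0 * ξ 2| ≤ L * p ^ 2 := abs_le_of_eq_mul (by ring) hx hz' hpLp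
  have hyz : |N ^ 2 * ξ 1 * ξ 2| ≤ L * p ^ 2 := abs_le_of_eq_mul (by ring) hy hz' hpLp
  have hxz' : |Ω ^ 2 * ξ 0 * ξ 2| ≤ L * p ^ 2 := abs_le_of_eq_mul (by ring) hx' hz hLpp
  have hyz' : |Ω ^ 2 * ξ 1 * ξ 2| ≤ L * p ^ 2 := abs_le_of_eq_mul (by ring) hy' hz hLpp
  have hxz'' : |Ω * N * ξ 0 * ξ 2| ≤ L * p ^ 2 := abs_le_of_eq_mul (by ring) hx hz hpp
  have hyz'' : |Ω * N * ξ 1 * ξ 2| ≤ L * p ^ 2 := abs_le_of_eq_mul (by ring) hy hz hpp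
  have hxy : |N ^ 2 * (ξ 0 ^ 2 + ξ 1 ^ 2)| ≤ L * p ^ 2 := by
    rw [abs_of_nonneg (by positivity)]
    exact (sq_mul_add_sq_le_nxp_sq Ω N ξ).trans hp2
  refine abs_inv_smul_apply_le (sq_nonneg p) hL0 (fun i k => ?_) i k
  fin_cases i <;> fin_cases k <;>
    simp only [Fin.zero_eta, Fin.mk_one, Fin.reduceFinMk, Matrix.of_apply, Matrix.cons_val',
      Matrix.cons_val_zero, Matrix.cons_val_one, Matrix.cons_val_two, Matrix.cons_val_three,
      Matrix.empty_val', Matrix.cons_val_fin_one, Matrix.tail_cons,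
      Matrix.vecHead, abs_neg, abs_zero] <;>
    first | positivity | assumption

lemma abs_M2_apply_le_one (i k : Fin 4) : |M2 Ω N ξ i k| ≤ 1 := by
  set p := nxp Ω N ξ
  have hp : 0 ≤ p := nxp_nonneg Ω N ξ
  have hx := abs_mul_apply_le_nxp Ω N ξ (i := 0) (by decide)
  have hy := abs_mul_apply_le_nxp Ω N ξ (i := 1) (by decide)
  have hz := abs_mul_apply_two_le_nxp Ω N ξ
  have hpq : p * ‖ξ‖ ≤ 1 * (‖ξ‖ * p) := by rw [one_mul, mul_comm]
  have hzz : |Ω * ξ 2 ^ 2| ≤ 1 * (‖ξ‖ * p) :=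
    abs_le_of_eq_mul (by ring) hz (abs_apply_le_norm ξ 2) hpq
  have hxz : |Ω * ξ 0 * ξ 2| ≤ 1 * (‖ξ‖ * p) :=
    abs_le_of_eq_mul (by ring) hz (abs_apply_le_norm ξ 0) hpq
  have hyz : |Ω * ξ 1 * ξ 2| ≤ 1 * (‖ξ‖ * p) :=
    abs_le_of_eq_mul (by ring) hz (abs_apply_le_norm ξ 1) hpq
  have hxz' : |N * ξ 0 * ξ 2| ≤ 1 * (‖ξ‖ * p) :=
    abs_le_of_eq_mul (by ring) hx (abs_apply_le_norm ξ 2) hpq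
  have hyz' : |N * ξ 1 * ξ 2| ≤ 1 * (‖ξ‖ * p) :=
    abs_le_of_eq_mul (by ring) hy (abs_apply_le_norm ξ 2) hpq
  have hxy : |N * (ξ 0 ^ 2 + ξ 1 ^ 2)| ≤ 1 * (‖ξ‖ * p) :=
    (one_mul (‖ξ‖ * p)).symm ▸ abs_mul_sq_add_sq_le_norm_mul_nxp Ω N ξ
  refine abs_inv_smul_apply_le (by positivity) zero_le_one (fun i k => ?_) i k
  fin_cases i <;> fin_cases k <;>
    simp only [Fin.zero_eta, Fin.mk_one, Fin.reduceFinMk, Matrix.of_apply, Matrix.cons_val',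
      Matrix.cons_val_zero, Matrix.cons_val_one, Matrix.cons_val_two, Matrix.cons_val_three,
      Matrix.empty_val', Matrix.cons_val_fin_one, Matrix.tail_cons, Matrix.vecHead, abs_neg,
      abs_zero] <;>
    first | positivity | assumption

lemma abs_M3_apply_le_one (i k : Fin 4) : |M3 Ω N ξ i k| ≤ 1 := by
  have hx := abs_mul_apply_le_nxp Ω N ξ (i := 0) (by decide)
  have hy := abs_mul_apply_le_nxp Ω N ξ (i := 1) (by decide)
  have hz := abs_mul_apply_two_le_nxp Ω N ξ
  set p := nxp Ω N ξ
  have hpp : p * p ≤ 1 * p ^ 2 := by rw [one_mul, sq]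
  have hxx : |N ^ 2 * ξ 0 ^ 2| ≤ 1 * p ^ 2 := abs_le_of_eq_mul (by ring) hx hx hpp
  have hyy : |N ^ 2 * ξ 1 ^ 2| ≤ 1 * p ^ 2 := abs_le_of_eq_mul (by ring) hy hy hpp
  have hzz : |Ω ^ 2 * ξ 2 ^ 2| ≤ 1 * p ^ 2 := abs_le_of_eq_mul (by ring) hz hz hpp
  have hxy : |N ^ 2 * ξ 0 * ξ 1| ≤ 1 * p ^ 2 := abs_le_of_eq_mul (by ring) hx hy hpp
  have hxz : |Ω * N * ξ 0 * ξ 2| ≤ 1 * p ^ 2 := abs_le_of_eq_mul (by ring) hx hz hpp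
  have hyz : |Ω * N * ξ 1 * ξ 2| ≤ 1 * p ^ 2 := abs_le_of_eq_mul (by ring) hy hz hpp
  refine abs_inv_smul_apply_le (sq_nonneg p) zero_le_one (fun i k => ?_) i k
  fin_cases i <;> fin_cases k <;>
    simp only [Fin.zero_eta, Fin.mk_one, Fin.reduceFinMk, Matrix.of_apply, Matrix.cons_val',
      Matrix.cons_val_zero, Matrix.cons_val_one, Matrix.cons_val_two, Matrix.cons_val_three,
      Matrix.empty_val', Matrix.cons_val_fin_one, Matrix.tail_cons, Matrix.vecHead, abs_neg,
      abs_zero] <;>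
    first | positivity | assumption

end Symbol

section Semigroup

variable {ν α Ω N L t : ℝ}

lemma abs_symS_apply_le (hL : 1 ≤ L) (hNΩ : |N| ≤ L * |Ω|) (hΩN : |Ω| ≤ L * |N|) (ξ : En 3)
    (i k : Fin 4) :
    |symS ν α Ω N t ξ i k| ≤ Real.exp (-(ν * t * ‖ξ‖ ^ (2 * α))) * (L + 2) := by
  set θ := t * nxp Ω N ξ / ‖ξ‖
  have h : symS ν α Ω N t ξ i k = Real.exp (-(ν * t * ‖ξ‖ ^ (2 * α))) *
      (Real.cos θ * M1 Ω N ξ i k + Real.sin θ * M2 Ω N ξ i k + M3 Ω N ξ i k) := rfl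
  rw [h, abs_mul, Real.abs_exp]
  gcongr
  calc |Real.cos θ * M1 Ω N ξ i k + Real.sin θ * M2 Ω N ξ i k + M3 Ω N ξ i k|
      ≤ |Real.cos θ * M1 Ω N ξ i k| + |Real.sin θ * M2 Ω N ξ i k| + |M3 Ω N ξ i k| :=
        abs_add_three _ _ _
    _ ≤ 1 * L + 1 * 1 + 1 := by
        gcongr
        · exact abs_mul_le_of_abs_le (Real.abs_cos_le_one θ) (abs_M1_apply_le Ω N ξ hL hNΩ hΩN i k)
        · exact abs_mul_le_of_abs_le (Real.abs_sin_le_one θ) (abs_M2_apply_le_one Ω N ξ i k)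
        · exact abs_M3_apply_le_one Ω N ξ i k
    _ = L + 2 := by ring

lemma norm_applyS_le (hL : 1 ≤ L) (hNΩ : |N| ≤ L * |Ω|) (hΩN : |Ω| ≤ L * |N|)
    (v : En 3 → Fin 4 → ℂ) (ξ : En 3) :
    ‖applyS ν α Ω N t v ξ‖ ≤ 12 * L * Real.exp (-(ν * t * ‖ξ‖ ^ (2 * α))) * ‖v ξ‖ :=
  calc ‖applyS ν α Ω N t v ξ‖
      ≤ Fintype.card (Fin 4) * (Real.exp (-(ν * t * ‖ξ‖ ^ (2 * α))) * (L + 2)) * ‖v ξ‖ :=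
        norm_map_ofReal_mulVec_le (by positivity) (abs_symS_apply_le hL hNΩ hΩN ξ) (v ξ)
    _ ≤ 12 * L * Real.exp (-(ν * t * ‖ξ‖ ^ (2 * α))) * ‖v ξ‖ := by
        rw [Fintype.card_fin]
        have := Real.exp_pos (-(ν * t * ‖ξ‖ ^ (2 * α)))
        gcongr ?_ * _
        push_cast
        nlinarith

end Semigroup

section Morrey

variable {n : ℕ} {F G : Type*} [NormedAddCommGroup F] [NormedAddCommGroup G] {q μ : ℝ}

lemma le_morreyNorm (f : En n → F) (x₀ : En n) {d : ℝ} (hd : 0 < d) :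
    ENNReal.ofReal (d ^ (-(μ / q))) *
      eLpNorm f (ENNReal.ofReal q) (volume.restrict (Metric.ball x₀ d)) ≤ morreyNorm q μ f :=
  le_iSup₂_of_le x₀ d (le_iSup_of_le hd le_rfl)

lemma morreyNorm_le {f : En n → F} {c : ℝ≥0∞}
    (h : ∀ x₀ d, 0 < d → ENNReal.ofReal (d ^ (-(μ / q))) *
      eLpNorm f (ENNReal.ofReal q) (volume.restrict (Metric.ball x₀ d)) ≤ c) :
    morreyNorm q μ f ≤ c :=
  iSup₂_le fun x₀ d => iSup_le (h x₀ d)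

lemma morreyNorm_le_of_norm_le {f : En n → F} {g : En n → G} {c : ℝ}
    (h : ∀ ξ, ‖g ξ‖ ≤ c * ‖f ξ‖) :
    morreyNorm q μ g ≤ ENNReal.ofReal c * morreyNorm q μ f :=
  morreyNorm_le fun x₀ d hd => by
    calc ENNReal.ofReal (d ^ (-(μ / q))) *
          eLpNorm g (ENNReal.ofReal q) (volume.restrict (Metric.ball x₀ d))
        ≤ ENNReal.ofReal (d ^ (-(μ / q))) * (ENNReal.ofReal c *
          eLpNorm f (ENNReal.ofReal q) (volume.restrict (Metric.ball x₀ d))) := by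
          gcongr
          exact eLpNorm_le_mul_eLpNorm_of_ae_le_mul (Filter.Eventually.of_forall h) _
      _ ≤ ENNReal.ofReal c * morreyNorm q μ f := by
          rw [mul_left_comm]
          gcongr
          exact le_morreyNorm f x₀ hd

lemma rpow_neg_mul_min_rpow_le {d R a b : ℝ} (hd : 0 < d) (hR : 0 < R) (ha : 0 ≤ a)
    (hab : a ≤ b) : d ^ (-a) * min d R ^ b ≤ R ^ (b - a) := by
  rcases le_total d R with hdR | hRd
  · rw [min_eq_left hdR, ← Real.rpow_add hd, neg_add_eq_sub]
    exact Real.rpow_le_rpow hd.le hdR (sub_nonneg.2 hab)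
  · rw [min_eq_right hRd, sub_eq_neg_add, Real.rpow_add hR]
    exact mul_le_mul_of_nonneg_right (Real.rpow_le_rpow_of_nonpos hR hRd (neg_nonpos.2 ha))
      (by positivity)

theorem morreyNorm_le_of_support_subset_closedBall [NeZero n] {q₁ q₂ R : ℝ} (hq₂ : 0 < q₂)
    (hq : q₂ ≤ q₁) (hμ : 0 ≤ μ) (hμn : μ ≤ n) (hR : 0 < R) {f : En n → F}
    (hf : AEStronglyMeasurable f volume) (hsupp : Function.support f ⊆ Metric.closedBall 0 R) :
    morreyNorm q₂ μ f ≤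
      ENNReal.ofReal ((volume (Metric.ball (0 : En n) 1)).toReal ^ (1 / q₂ - 1 / q₁) *
        R ^ ((n - μ) * (1 / q₂ - 1 / q₁))) * morreyNorm q₁ μ f := by
  set δ := 1 / q₂ - 1 / q₁ with hδ_def
  set V := (volume (Metric.ball (0 : En n) 1)).toReal
  have hq₁ : 0 < q₁ := hq₂.trans_le hq
  have hδ : 0 ≤ δ := sub_nonneg.2 (one_div_le_one_div_of_le hq₂ hq)
  have hV : 0 ≤ V := ENNReal.toReal_nonneg
  have hvol : ∀ (x : En n) r, 0 ≤ r →
      volume (Metric.closedBall x r) = ENNReal.ofReal (V * r ^ n) := by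
    intro x r hr
    rw [Measure.addHaar_closedBall volume x hr, finrank_euclideanSpace_fin, mul_comm,
      ENNReal.ofReal_mul hV, ENNReal.ofReal_toReal measure_ball_lt_top.ne]
  refine morreyNorm_le fun x₀ d hd => ?_
  set B := Metric.ball x₀ d
  set m := min d R
  have hm : 0 < m := lt_min hd hR
  have hvol_inter : volume (Metric.closedBall 0 R ∩ B) ≤ ENNReal.ofReal (V * m ^ n) := by
    rcases le_total d R with h | h
    · rw [show m = d from min_eq_left h, ← hvol x₀ d hd.le]
      exact measure_mono (Set.inter_subset_right.trans Metric.ball_subset_closedBall)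
    · rw [show m = R from min_eq_right h, ← hvol 0 R hR.le]
      exact measure_mono Set.inter_subset_left
  have hHolder : eLpNorm f (ENNReal.ofReal q₂) (volume.restrict B) ≤
      eLpNorm f (ENNReal.ofReal q₁) (volume.restrict B) * ENNReal.ofReal ((V * m ^ n) ^ δ) := by
    have h := eLpNorm_le_eLpNorm_mul_rpow_measure_univ
      (μ := (volume.restrict B).restrict (Metric.closedBall 0 R))
      (ENNReal.ofReal_le_ofReal hq) hf.restrict.restrict
    rw [eLpNorm_restrict_eq_of_support_subset hsupp, eLpNorm_restrict_eq_of_support_subset hsupp,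
      Measure.restrict_apply_univ, Measure.restrict_apply measurableSet_closedBall,
      ENNReal.toReal_ofReal hq₂.le, ENNReal.toReal_ofReal hq₁.le] at h
    refine h.trans ?_
    gcongr
    rw [← ENNReal.ofReal_rpow_of_nonneg (by positivity) hδ]
    exact ENNReal.rpow_le_rpow hvol_inter hδ
  have hweight : d ^ (-(μ / q₂)) * (V * m ^ n) ^ δ ≤
      V ^ δ * R ^ ((n - μ) * δ) * d ^ (-(μ / q₁)) := by
    have hsplit : d ^ (-(μ / q₂)) = d ^ (-(μ * δ)) * d ^ (-(μ / q₁)) := by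
      rw [← Real.rpow_add hd, hδ_def]; ring_nf
    rw [hsplit, Real.mul_rpow hV (by positivity), ← Real.rpow_natCast_mul hm.le]
    calc d ^ (-(μ * δ)) * d ^ (-(μ / q₁)) * (V ^ δ * m ^ (n * δ))
        = V ^ δ * (d ^ (-(μ * δ)) * m ^ (n * δ)) * d ^ (-(μ / q₁)) := by ring
      _ ≤ V ^ δ * R ^ (n * δ - μ * δ) * d ^ (-(μ / q₁)) := by
          gcongr
          exact rpow_neg_mul_min_rpow_le hd hR (mul_nonneg hμ hδ)
            (mul_le_mul_of_nonneg_right hμn hδ)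
      _ = V ^ δ * R ^ ((n - μ) * δ) * d ^ (-(μ / q₁)) := by rw [sub_mul]
  calc ENNReal.ofReal (d ^ (-(μ / q₂))) * eLpNorm f (ENNReal.ofReal q₂) (volume.restrict B)
      ≤ ENNReal.ofReal (d ^ (-(μ / q₂))) * (eLpNorm f (ENNReal.ofReal q₁) (volume.restrict B) *
          ENNReal.ofReal ((V * m ^ n) ^ δ)) := by
        gcongr
    _ = ENNReal.ofReal (d ^ (-(μ / q₂)) * (V * m ^ n) ^ δ) *
          eLpNorm f (ENNReal.ofReal q₁) (volume.restrict B) := by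
        rw [ENNReal.ofReal_mul (by positivity)]; ring
    _ ≤ ENNReal.ofReal (V ^ δ * R ^ ((n - μ) * δ) * d ^ (-(μ / q₁))) *
          eLpNorm f (ENNReal.ofReal q₁) (volume.restrict B) := by
        gcongr
    _ = ENNReal.ofReal (V ^ δ * R ^ ((n - μ) * δ)) * (ENNReal.ofReal (d ^ (-(μ / q₁))) *
          eLpNorm f (ENNReal.ofReal q₁) (volume.restrict B)) := by
        rw [ENNReal.ofReal_mul (by positivity)]; ring
    _ ≤ ENNReal.ofReal (V ^ δ * R ^ ((n - μ) * δ)) * morreyNorm q₁ μ f := by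
        gcongr
        exact le_morreyNorm f x₀ hd

end Morrey

lemma lrNorm_le_mul {r : ℝ≥0∞} (hr : r ≠ 0) {c : ℝ≥0∞} {a b : ℤ → ℝ≥0∞}
    (h : ∀ j, a j ≤ c * b j) : lrNorm r a ≤ c * lrNorm r b := by
  unfold lrNorm
  split_ifs with htop
  · exact iSup_le fun j => (h j).trans (by gcongr; exact le_iSup b j)
  · have hρ : 0 < r.toReal := ENNReal.toReal_pos hr htop
    calc (∑' j, a j ^ r.toReal) ^ (1 / r.toReal)
        ≤ (∑' j, (c * b j) ^ r.toReal) ^ (1 / r.toReal) := by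
          gcongr with j
          exact h j
      _ = (c ^ r.toReal * ∑' j, b j ^ r.toReal) ^ (1 / r.toReal) := by
          simp_rw [ENNReal.mul_rpow_of_nonneg _ _ hρ.le, ENNReal.tsum_mul_left]
      _ = c * (∑' j, b j ^ r.toReal) ^ (1 / r.toReal) := by
          rw [ENNReal.mul_rpow_of_nonneg _ _ (by positivity), ← ENNReal.rpow_mul,
            mul_one_div_cancel hρ.ne', ENNReal.rpow_one]

lemma rpow_mul_exp_neg_le {σ y : ℝ} (hσ : 0 ≤ σ) (hy : 0 < y) :
    y ^ σ * Real.exp (-y) ≤ σ ^ σ := by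
  rcases hσ.eq_or_lt with rfl | hσ
  · simpa using hy.le
  have h : (y / σ) ^ σ ≤ Real.exp (y - σ) :=
    calc (y / σ) ^ σ ≤ Real.exp (y / σ - 1) ^ σ := by
          gcongr
          linarith [Real.add_one_le_exp (y / σ - 1)]
      _ = Real.exp (y - σ) := by rw [← Real.exp_mul]; field_simp
  rw [Real.div_rpow hy.le hσ.le, div_le_iff₀ (by positivity)] at h
  calc y ^ σ * Real.exp (-y) ≤ Real.exp (y - σ) * σ ^ σ * Real.exp (-y) := by gcongr
    _ = σ ^ σ * Real.exp (-σ) := by rw [mul_right_comm, ← Real.exp_add]; ring_nf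
    _ ≤ σ ^ σ := mul_le_of_le_one_right (by positivity) (Real.exp_le_one_iff.2 (by linarith))

lemma rpow_mul_exp_neg_mul_rpow_le {β γ κ w : ℝ} (hβ : 0 ≤ β) (hγ : 0 < γ) (hκ : 0 < κ)
    (hw : 0 < w) :
    w ^ β * Real.exp (-(κ * w ^ γ)) ≤ (β / γ) ^ (β / γ) * κ ^ (-(β / γ)) := by
  set σ := β / γ with hσ
  have hwβ : w ^ β = (κ * w ^ γ) ^ σ * κ ^ (-σ) := by
    rw [Real.mul_rpow hκ.le (by positivity), ← Real.rpow_mul hw.le, mul_right_comm,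
      ← Real.rpow_add hκ, add_neg_cancel, Real.rpow_zero, one_mul]
    rw [hσ]
    field_simp
  calc w ^ β * Real.exp (-(κ * w ^ γ))
      = (κ * w ^ γ) ^ σ * Real.exp (-(κ * w ^ γ)) * κ ^ (-σ) := by rw [hwβ]; ring
    _ ≤ σ ^ σ * κ ^ (-σ) := by
        gcongr
        exact rpow_mul_exp_neg_le (by positivity) (by positivity)

/-- The Littlewood–Paley piece `φ_j f̂` of the paper; `f` is already the Fourier side. -/
def dyadicPiece {n : ℕ} {F : Type*} [NormedAddCommGroup F] [NormedSpace ℝ F] (φ : En n → ℝ)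
    (j : ℤ) (f : En n → F) : En n → F :=
  fun ξ => φ ((2 : ℝ) ^ (-j) • ξ) • f ξ

namespace IsLP

variable {n : ℕ} {F : Type*} [NormedAddCommGroup F] [NormedSpace ℝ F] {φ : En n → ℝ}

lemma norm_mem_Icc (hφ : IsLP φ) {j : ℤ} {ξ : En n} (h : φ ((2 : ℝ) ^ (-j) • ξ) ≠ 0) :
    3 / 4 * 2 ^ j ≤ ‖ξ‖ ∧ ‖ξ‖ ≤ 8 / 3 * 2 ^ j := by
  have h2j : (0 : ℝ) < 2 ^ j := by positivity
  obtain ⟨hlo, hhi⟩ := hφ.2.2.2.1 _ h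
  have hnorm : ‖(2 : ℝ) ^ (-j) • ξ‖ = ‖ξ‖ / 2 ^ j := by
    rw [norm_smul, zpow_neg, norm_inv, Real.norm_of_nonneg h2j.le, inv_mul_eq_div]
  rw [hnorm] at hlo hhi
  exact ⟨(le_div_iff₀ h2j).1 hlo, (div_le_iff₀ h2j).1 hhi⟩

lemma support_dyadicPiece_subset (hφ : IsLP φ) (j : ℤ) (f : En n → F) :
    Function.support (dyadicPiece φ j f) ⊆ Metric.closedBall 0 (8 / 3 * 2 ^ j) := fun _ hξ =>
  mem_closedBall_zero_iff.2 (hφ.norm_mem_Icc (left_ne_zero_of_smul hξ)).2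

lemma aestronglyMeasurable_dyadicPiece (hφ : IsLP φ) (j : ℤ) {f : En n → F}
    (hf : AEStronglyMeasurable f volume) : AEStronglyMeasurable (dyadicPiece φ j f) volume :=
  (hφ.1.continuous.comp (continuous_const_smul _)).aestronglyMeasurable.smul hf

end IsLP

section Smoothing

variable {φ : En 3 → ℝ} {ν α Ω N L t : ℝ}

lemma norm_dyadicPiece_applyS_le (hφ : IsLP φ) (hL : 1 ≤ L) (hNΩ : |N| ≤ L * |Ω|)
    (hΩN : |Ω| ≤ L * |N|) (hνt : 0 ≤ ν * t) (hα : 0 ≤ α) (v : En 3 → Fin 4 → ℂ) (j : ℤ)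
    (ξ : En 3) :
    ‖dyadicPiece φ j (applyS ν α Ω N t v) ξ‖ ≤
      12 * L * Real.exp (-(ν * t * (3 / 4 * 2 ^ j) ^ (2 * α))) * ‖dyadicPiece φ j v ξ‖ := by
  by_cases h : φ ((2 : ℝ) ^ (-j) • ξ) = 0
  · simp only [dyadicPiece, h, zero_smul, norm_zero, mul_zero, le_refl]
  simp only [dyadicPiece, norm_smul]
  calc ‖φ ((2 : ℝ) ^ (-j) • ξ)‖ * ‖applyS ν α Ω N t v ξ‖
      ≤ ‖φ ((2 : ℝ) ^ (-j) • ξ)‖ *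
          (12 * L * Real.exp (-(ν * t * ‖ξ‖ ^ (2 * α))) * ‖v ξ‖) := by
        gcongr
        exact norm_applyS_le hL hNΩ hΩN v ξ
    _ ≤ ‖φ ((2 : ℝ) ^ (-j) • ξ)‖ *
          (12 * L * Real.exp (-(ν * t * (3 / 4 * 2 ^ j) ^ (2 * α))) * ‖v ξ‖) := by
        have := zero_le_one.trans hL
        gcongr
        exact (hφ.norm_mem_Icc h).1
    _ = 12 * L * Real.exp (-(ν * t * (3 / 4 * 2 ^ j) ^ (2 * α))) *
          (‖φ ((2 : ℝ) ^ (-j) • ξ)‖ * ‖v ξ‖) := by ring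

lemma morreyNorm_dyadicPiece_applyS_le (hφ : IsLP φ) {q₁ q₂ μ : ℝ} (hq₂ : 0 < q₂)
    (hq : q₂ ≤ q₁) (hμ : 0 ≤ μ) (hμ3 : μ ≤ 3) (hL : 1 ≤ L) (hNΩ : |N| ≤ L * |Ω|)
    (hΩN : |Ω| ≤ L * |N|) (hνt : 0 ≤ ν * t) (hα : 0 ≤ α) {v : En 3 → Fin 4 → ℂ}
    (hv : AEStronglyMeasurable v volume) (j : ℤ) :
    morreyNorm q₂ μ (dyadicPiece φ j (applyS ν α Ω N t v)) ≤
      ENNReal.ofReal (12 * L * Real.exp (-(ν * t * (3 / 4 * 2 ^ j) ^ (2 * α))) *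
        ((volume (Metric.ball (0 : En 3) 1)).toReal ^ (1 / q₂ - 1 / q₁) *
          (8 / 3 * 2 ^ j) ^ ((3 - μ) * (1 / q₂ - 1 / q₁)))) *
        morreyNorm q₁ μ (dyadicPiece φ j v) := by
  rw [ENNReal.ofReal_mul (by positivity), mul_assoc]
  calc morreyNorm q₂ μ (dyadicPiece φ j (applyS ν α Ω N t v))
      ≤ ENNReal.ofReal (12 * L * Real.exp (-(ν * t * (3 / 4 * 2 ^ j) ^ (2 * α)))) *
          morreyNorm q₂ μ (dyadicPiece φ j v) :=
        morreyNorm_le_of_norm_le (norm_dyadicPiece_applyS_le hφ hL hNΩ hΩN hνt hα v j)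
    _ ≤ _ := by
        gcongr
        exact_mod_cast morreyNorm_le_of_support_subset_closedBall hq₂ hq hμ hμ3 (by positivity)
          (hφ.aestronglyMeasurable_dyadicPiece j hv) (hφ.support_dyadicPiece_subset j v)

lemma exists_morreyNorm_dyadicPiece_applyS_le (hφ : IsLP φ) {q₁ q₂ μ : ℝ} (hq₂ : 0 < q₂)
    (hq : q₂ ≤ q₁) (hμ : 0 ≤ μ) (hμ3 : μ ≤ 3) (hα : 0 < α) :
    ∃ C > 0, ∀ ν Ω N L t : ℝ, 0 < ν → 0 < t → 1 ≤ L → |N| ≤ L * |Ω| → |Ω| ≤ L * |N| →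
      ∀ v : En 3 → Fin 4 → ℂ, AEStronglyMeasurable v volume → ∀ j : ℤ,
        morreyNorm q₂ μ (dyadicPiece φ j (applyS ν α Ω N t v)) ≤
          ENNReal.ofReal (C * L * (ν * t) ^ (-((3 - μ) * (1 / q₂ - 1 / q₁) / (2 * α)))) *
            morreyNorm q₁ μ (dyadicPiece φ j v) := by
  set δ := 1 / q₂ - 1 / q₁
  set β := (3 - μ) * δ
  set σ := β / (2 * α)
  set K := (volume (Metric.ball (0 : En 3) 1)).toReal ^ δ
  have hβ : 0 ≤ β := mul_nonneg (by linarith) (sub_nonneg.2 (one_div_le_one_div_of_le hq₂ hq))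
  have hσ : 0 ≤ σ := by positivity
  have hK : 0 < K := Real.rpow_pos_of_pos (ENNReal.toReal_pos
    (Metric.measure_ball_pos volume _ one_pos).ne' measure_ball_lt_top.ne) δ
  have hσσ : 0 < σ ^ σ := by
    rcases hσ.eq_or_lt with h | h
    · rw [← h, Real.rpow_zero]; exact one_pos
    · positivity
  refine ⟨12 * K * (32 / 9) ^ β * σ ^ σ, by positivity,
    fun ν Ω N L t hν ht hL hNΩ hΩN v hv j => ?_⟩
  refine (morreyNorm_dyadicPiece_applyS_le hφ hq₂ hq hμ hμ3 hL hNΩ hΩN (mul_pos hν ht).le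
    hα.le hv j).trans ?_
  gcongr ENNReal.ofReal ?_ * _
  have hw : (0 : ℝ) < 3 / 4 * 2 ^ j := by positivity
  set w : ℝ := 3 / 4 * 2 ^ j
  calc 12 * L * Real.exp (-(ν * t * w ^ (2 * α))) * (K * (8 / 3 * 2 ^ j) ^ β)
      = 12 * K * (32 / 9) ^ β * L * (w ^ β * Real.exp (-(ν * t * w ^ (2 * α)))) := by
        rw [show (8 / 3 : ℝ) * 2 ^ j = 32 / 9 * w by ring,
          Real.mul_rpow (x := 32 / 9) (by norm_num) hw.le]
        ring
    _ ≤ 12 * K * (32 / 9) ^ β * L * (σ ^ σ * (ν * t) ^ (-σ)) := by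
        have := zero_le_one.trans hL
        gcongr ?_ * ?_
        exact rpow_mul_exp_neg_mul_rpow_le hβ (by linarith) (mul_pos hν ht) hw
    _ = 12 * K * (32 / 9) ^ β * σ ^ σ * L * (ν * t) ^ (-σ) := by ring

end Smoothing

lemma abs_le_max_div_mul_abs {Ω N : ℝ} (hΩ : Ω ≠ 0) (hN : 0 < N) :
    |N| ≤ max 2 (max (|Ω| / N) (N / |Ω|)) * |Ω| ∧
      |Ω| ≤ max 2 (max (|Ω| / N) (N / |Ω|)) * |N| := by
  rw [abs_of_pos hN, ← div_le_iff₀ (abs_pos.2 hΩ), ← div_le_iff₀ hN]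
  exact ⟨(le_max_right _ _).trans (le_max_right _ _), (le_max_left _ _).trans (le_max_right _ _)⟩

theorem semigroup_smoothing_estimate_general (μ q₁ q₂ s α : ℝ) (r : ℝ≥0∞)
    (hμ : 0 ≤ μ) (hμ' : μ < 3) (hq₂ : 1 ≤ q₂) (hq : q₂ ≤ q₁)
    (hr : 1 ≤ r) (hα : 1 / 2 ≤ α)
    (φ : En 3 → ℝ) (hφ : IsLP φ) :
    ∃ C > (0 : ℝ), ∀ ν > (0 : ℝ), ∀ Ω : ℝ, Ω ≠ 0 → ∀ N > (0 : ℝ), ∀ t > (0 : ℝ),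
      ∀ v0 : En 3 → Fin 4 → ℂ, AEStronglyMeasurable v0 volume →
        fbmNorm s q₁ μ r φ v0 < ⊤ →
        fbmNorm s q₂ μ r φ (applyS ν α Ω N t v0) ≤
          ENNReal.ofReal (C * max 2 (max (|Ω| / N) (N / |Ω|)) *
              ν ^ (-(1 / (2 * α)) * ((3 - μ) / q₂ - (3 - μ) / q₁)) *
              t ^ (-(1 / (2 * α)) * ((3 - μ) / q₂ - (3 - μ) / q₁))) *
            fbmNorm s q₁ μ r φ v0 := by
  obtain ⟨C, hC, hblock⟩ := exists_morreyNorm_dyadicPiece_applyS_le hφ (by linarith) hq hμ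
    hμ'.le (by linarith)
  refine ⟨C, hC, fun ν hν Ω hΩ N hN t ht v0 hv0 _ => ?_⟩
  obtain ⟨hNΩ, hΩN⟩ := abs_le_max_div_mul_abs hΩ hN
  have hνt : ν ^ (-(1 / (2 * α)) * ((3 - μ) / q₂ - (3 - μ) / q₁)) *
      t ^ (-(1 / (2 * α)) * ((3 - μ) / q₂ - (3 - μ) / q₁)) =
        (ν * t) ^ (-((3 - μ) * (1 / q₂ - 1 / q₁) / (2 * α))) := by
    rw [← Real.mul_rpow hν.le ht.le]; ring_nf
  rw [mul_assoc _ (ν ^ _), hνt]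
  refine lrNorm_le_mul (zero_lt_one.trans_le hr).ne' fun j => ?_
  rw [mul_left_comm]
  gcongr
  exact hblock ν Ω N _ t hν ht (one_le_two.trans (le_max_left _ _)) hNΩ hΩN v0 hv0 j

/-- Smoothing estimate for the fractional Boussinesq–Coriolis–Stratification semigroup:
`‖S^α_{Ω,N}(t)v₀‖_{FN^s_{q₂,μ,r}} ≤ C L ν^{-σ} t^{-σ} ‖v₀‖_{FN^s_{q₁,μ,r}}` with
`σ = (1/(2α))((3−μ)/q₂ − (3−μ)/q₁)`, `C` independent of `Ω` and `N`. -/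
theorem semigroup_smoothing_estimate (μ q₁ q₂ s α : ℝ) (r : ℝ≥0∞)
    (hμ : 0 ≤ μ) (hμ' : μ < 3) (hq₂ : 1 ≤ q₂) (hq : q₂ ≤ q₁)
    (hr : 1 ≤ r) (hα : 1 / 2 ≤ α) (hα' : α < 5 / 2)
    (φ : En 3 → ℝ) (hφ : IsLP φ) :
    ∃ C > (0 : ℝ), ∀ ν > (0 : ℝ), ∀ Ω : ℝ, Ω ≠ 0 → ∀ N > (0 : ℝ), ∀ t > (0 : ℝ),
      ∀ v0 : En 3 → Fin 4 → ℂ, AEStronglyMeasurable v0 volume →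
        fbmNorm s q₁ μ r φ v0 < ⊤ →
        fbmNorm s q₂ μ r φ (applyS ν α Ω N t v0) ≤
          ENNReal.ofReal (C * max 2 (max (|Ω| / N) (N / |Ω|)) *
              ν ^ (-(1 / (2 * α)) * ((3 - μ) / q₂ - (3 - μ) / q₁)) *
              t ^ (-(1 / (2 * α)) * ((3 - μ) / q₂ - (3 - μ) / q₁))) *
            fbmNorm s q₁ μ r φ v0 :=
  semigroup_smoothing_estimate_general μ q₁ q₂ s α r hμ hμ' hq₂ hq hr hα φ hφ

end
end
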